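/- arXiv:1512.07181 — 2 statements merged into one kernel-verified Lean document; each statement's English description precedes it below -/
import Mathlib

section
/- Define s(k) = (-4k^4 + 4k^2 - 4)E(k) + (2k^4 - 6k^2 + 4)K(k) for k in (0,1). Then s(k) < 0 for all k in (0,1). -/
/-!
Write `A = -4k⁴ + 4k² - 4`, `B = 2k⁴ - 6k² + 4`, `w = √(1 - k²)` and `a(θ) = √(1 - k² sin² θ)`,
so that `s(k) = ∫₀^{π/2} (A a + B / a) dθ`. The integrand is not negative everywhere, but
pairing `θ` with `π/2 - θ` helps: `a = a(θ)` and `b = a(π/2 - θ)` satisfy `a² + b² = 1 + w²`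
and `a, b ≥ w`, which forces `ab ≥ w` and `a + b ≥ 1 + w`. The paired integrand
`(a + b)(A + B/(ab))` is then at most `(1 + w)(A + B/w)`, its value at `(a, b) = (1, w)`,
and this is negative because `Aw + B = -2w(1 - w)²(2w² + 3w + 2)`.
-/

/-- The complete elliptic integral of the first kind. -/
noncomputable def ellipticK (k : ℝ) : ℝ :=
  ∫ θ in (0:ℝ)..(Real.pi/2), 1 / Real.sqrt (1 - k^2 * Real.sin θ ^ 2)

/-- The complete elliptic integral of the second kind. -/
noncomputable def ellipticE (k : ℝ) : ℝ :=
  ∫ θ in (0:ℝ)..(Real.pi/2), Real.sqrt (1 - k^2 * Real.sin θ ^ 2)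

/-- s(k) = (-4k⁴ + 4k² - 4)E(k) + (2k⁴ - 6k² + 4)K(k). -/
noncomputable def sFun (k : ℝ) : ℝ :=
  (-4*k^4 + 4*k^2 - 4) * ellipticE k + (2*k^4 - 6*k^2 + 4) * ellipticK k

open Real intervalIntegral

theorem two_mul_integral_le_of_add_reflect_le {f : ℝ → ℝ} {c C : ℝ} (hc : 0 ≤ c)
    (hf : IntervalIntegrable f MeasureTheory.volume 0 c)
    (h : ∀ θ ∈ Set.Icc 0 c, f θ + f (c - θ) ≤ C) :
    2 * ∫ θ in 0..c, f θ ≤ c * C := by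
  have hf' : IntervalIntegrable (fun θ => f (c - θ)) MeasureTheory.volume 0 c := by
    simpa using hf.symm.comp_sub_left c
  have hreflect : ∫ θ in 0..c, f (c - θ) = ∫ θ in 0..c, f θ := by
    simp [integral_comp_sub_left]
  calc 2 * ∫ θ in 0..c, f θ = ∫ θ in 0..c, (f θ + f (c - θ)) := by
        rw [integral_add hf hf', hreflect]; ring
    _ ≤ ∫ _ in 0..c, C := integral_mono_on hc (hf.add hf') intervalIntegrable_const h
    _ = c * C := by simp

section PairBounds

variable {w a b : ℝ}

theorem le_mul_of_sq_add_sq_eq (hw : 0 ≤ w) (ha : w ≤ a) (hb : w ≤ b)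
    (hab : a ^ 2 + b ^ 2 = 1 + w ^ 2) : w ≤ a * b := by
  have hsq : w ^ 2 ≤ (a * b) ^ 2 := by
    nlinarith [mul_nonneg (sub_nonneg.2 (pow_le_pow_left₀ hw ha 2))
        (sub_nonneg.2 (pow_le_pow_left₀ hw hb 2))]
  exact abs_le_of_sq_le_sq' hsq (mul_nonneg (hw.trans ha) (hw.trans hb)) |>.2

theorem one_add_le_add_of_sq_add_sq_eq (hw : 0 ≤ w) (ha : w ≤ a) (hb : w ≤ b)
    (hab : a ^ 2 + b ^ 2 = 1 + w ^ 2) : 1 + w ≤ a + b := by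
  have hmul := le_mul_of_sq_add_sq_eq hw ha hb hab
  nlinarith [sq_nonneg (a + b - 1 - w)]

end PairBounds

theorem mul_add_div_le_of_le {A B w p q : ℝ} (hB : 0 ≤ B) (hw : 0 < w)
    (hAB : A * w + B ≤ 0) (hq : w ≤ q) (hp : 1 + w ≤ p) :
    p * (A + B / q) ≤ (1 + w) * (A + B / w) := by
  have hBq : B / q ≤ B / w := div_le_div_of_nonneg_left hB hw hq
  have hAB' : A + B / w ≤ 0 := by
    rw [← mul_div_cancel_right₀ A hw.ne', ← add_div]
    exact div_nonpos_of_nonpos_of_nonneg hAB hw.le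
  calc p * (A + B / q) ≤ (1 + w) * (A + B / q) := mul_le_mul_of_nonpos_right hp (by linarith)
    _ ≤ (1 + w) * (A + B / w) := by gcongr

theorem sCoeff_mul_sqrt_add_sCoeff (k : ℝ) (hk : k ^ 2 ≤ 1) :
    (-4*k^4 + 4*k^2 - 4) * √(1 - k^2) + (2*k^4 - 6*k^2 + 4) =
      -2 * √(1 - k^2) * (1 - √(1 - k^2)) ^ 2 * (2 * √(1 - k^2) ^ 2 + 3 * √(1 - k^2) + 2) := by
  set w := √(1 - k^2)
  have hk2 : k ^ 2 = 1 - w ^ 2 := by rw [sq_sqrt (by linarith)]; ring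
  rw [show k ^ 4 = (k ^ 2) ^ 2 by ring, hk2]
  ring

theorem sCoeff_add_div_sqrt_neg {k : ℝ} (hk0 : 0 < k) (hk1 : k < 1) :
    (-4*k^4 + 4*k^2 - 4) + (2*k^4 - 6*k^2 + 4) / √(1 - k^2) < 0 := by
  have hk2 : k ^ 2 < 1 := by nlinarith
  set w := √(1 - k^2)
  have hw : 0 < w := sqrt_pos.2 (by linarith)
  have hw1 : 0 < 1 - w := by linarith [(sqrt_lt' one_pos).2 (by nlinarith : 1 - k^2 < 1 ^ 2)]
  rw [← mul_div_cancel_right₀ (-4*k^4 + 4*k^2 - 4) hw.ne', ← add_div,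
    sCoeff_mul_sqrt_add_sCoeff k hk2.le]
  refine div_neg_of_neg_of_pos ?_ hw
  have := mul_pos (mul_pos hw (pow_pos hw1 2)) (by positivity : 0 < 2 * w ^ 2 + 3 * w + 2)
  linarith

noncomputable def sIntegrand (k θ : ℝ) : ℝ :=
  (-4*k^4 + 4*k^2 - 4) * √(1 - k^2 * sin θ ^ 2) + (2*k^4 - 6*k^2 + 4) / √(1 - k^2 * sin θ ^ 2)

theorem one_sub_sq_mul_sin_sq_pos {k : ℝ} (hk : k ^ 2 < 1) (θ : ℝ) :
    0 < 1 - k ^ 2 * sin θ ^ 2 := by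
  nlinarith [sin_sq_le_one θ, sq_nonneg k]

theorem continuous_sIntegrand {k : ℝ} (hk : k ^ 2 < 1) : Continuous (sIntegrand k) := by
  have hsqrt : Continuous fun θ => √(1 - k ^ 2 * sin θ ^ 2) := by fun_prop
  exact (continuous_const.mul hsqrt).add <| continuous_const.div hsqrt
    fun θ => (sqrt_pos.2 (one_sub_sq_mul_sin_sq_pos hk θ)).ne'

theorem sFun_eq_integral_sIntegrand {k : ℝ} (hk : k ^ 2 < 1) :
    sFun k = ∫ θ in 0..π/2, sIntegrand k θ := by
  have hsqrt : Continuous fun θ => √(1 - k ^ 2 * sin θ ^ 2) := by fun_prop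
  have hinv : Continuous fun θ => 1 / √(1 - k ^ 2 * sin θ ^ 2) := continuous_const.div hsqrt
    fun θ => (sqrt_pos.2 (one_sub_sq_mul_sin_sq_pos hk θ)).ne'
  rw [sFun, ellipticE, ellipticK, ← integral_const_mul, ← integral_const_mul,
    ← integral_add ((hsqrt.intervalIntegrable _ _).const_mul _)
      ((hinv.intervalIntegrable _ _).const_mul _)]
  simp only [sIntegrand, mul_one_div]

theorem sIntegrand_add_sIntegrand_pi_div_two_sub_le {k : ℝ} (hk : k ^ 2 < 1) (θ : ℝ) :
    sIntegrand k θ + sIntegrand k (π/2 - θ) ≤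
      (1 + √(1 - k^2)) * ((-4*k^4 + 4*k^2 - 4) + (2*k^4 - 6*k^2 + 4) / √(1 - k^2)) := by
  set w := √(1 - k^2)
  set a := √(1 - k^2 * sin θ ^ 2)
  set b := √(1 - k^2 * sin (π/2 - θ) ^ 2)
  have hw : 0 < w := sqrt_pos.2 (by linarith)
  have hwa : w ≤ a := sqrt_le_sqrt (by nlinarith [sin_sq_le_one θ, sq_nonneg k])
  have hwb : w ≤ b := sqrt_le_sqrt (by nlinarith [sin_sq_le_one (π/2 - θ), sq_nonneg k])
  have hab : a ^ 2 + b ^ 2 = 1 + w ^ 2 := by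
    rw [sq_sqrt (one_sub_sq_mul_sin_sq_pos hk θ).le,
      sq_sqrt (one_sub_sq_mul_sin_sq_pos hk _).le, sq_sqrt (by linarith), sin_pi_div_two_sub]
    linear_combination (-k ^ 2) * sin_sq_add_cos_sq θ
  have hB : 0 ≤ 2*k^4 - 6*k^2 + 4 := by nlinarith [sq_nonneg k]
  have hAB : (-4*k^4 + 4*k^2 - 4) * w + (2*k^4 - 6*k^2 + 4) ≤ 0 := by
    rw [sCoeff_mul_sqrt_add_sCoeff k hk.le]
    have := mul_nonneg (mul_nonneg hw.le (sq_nonneg (1 - w)))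
      (by positivity : (0:ℝ) ≤ 2 * w ^ 2 + 3 * w + 2)
    linarith
  have hpair : sIntegrand k θ + sIntegrand k (π/2 - θ) =
      (a + b) * ((-4*k^4 + 4*k^2 - 4) + (2*k^4 - 6*k^2 + 4) / (a * b)) := by
    change (-4*k^4 + 4*k^2 - 4) * a + (2*k^4 - 6*k^2 + 4) / a
      + ((-4*k^4 + 4*k^2 - 4) * b + (2*k^4 - 6*k^2 + 4) / b) = _
    field_simp [(hw.trans_le hwa).ne', (hw.trans_le hwb).ne']
    ring
  rw [hpair]
  exact mul_add_div_le_of_le hB hw hAB (le_mul_of_sq_add_sq_eq hw.le hwa hwb hab)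
    (one_add_le_add_of_sq_add_sq_eq hw.le hwa hwb hab)

theorem stmt1 (k : ℝ) (hk : k ∈ Set.Ioo (0:ℝ) 1) : sFun k < 0 := by
  obtain ⟨hk0, hk1⟩ := hk
  have hk2 : k ^ 2 < 1 := by nlinarith
  have hbound : 2 * sFun k ≤ π / 2 *
      ((1 + √(1 - k^2)) * ((-4*k^4 + 4*k^2 - 4) + (2*k^4 - 6*k^2 + 4) / √(1 - k^2))) := by
    rw [sFun_eq_integral_sIntegrand hk2]
    exact two_mul_integral_le_of_add_reflect_le (by positivity)
      ((continuous_sIntegrand hk2).intervalIntegrable _ _)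
      fun θ _ => sIntegrand_add_sIntegrand_pi_div_two_sub_le hk2 θ
  have hneg := sCoeff_add_div_sqrt_neg hk0 hk1
  nlinarith [mul_neg_of_pos_of_neg (by positivity : 0 < π / 2 * (1 + √(1 - k^2))) hneg]
end

section
/- Suppose real numbers β₁ < 0 < β₂ < β₃ satisfy β₁+β₂+β₃ = 5(c-1)/4 and β₁β₂+β₁β₃+β₂β₃ = 0 for some real c. Then c > 1 and 0 < β₂ < 5(c-1)/6 < β₃ < 5(c-1)/4. -/
/-!
Eliminating `β₁` with `β₁(β₂ + β₃) = -β₂β₃`, each claimed inequality for `σ = β₁ + β₂ + β₃`,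
multiplied by `β₂ + β₃ > 0`, becomes positivity of a polynomial in `0 < β₂ < β₃` alone:
`σ(β₂ + β₃) = β₂² + β₂β₃ + β₃²`, `(σ - β₃)(β₂ + β₃) = β₂²`,
`(2σ - 3β₂)(β₂ + β₃) = (β₃ - β₂)(2β₃ + β₂)` and `(3β₃ - 2σ)(β₂ + β₃) = (β₃ - β₂)(β₃ + 2β₂)`.
The point `2σ/3` is the nonzero critical point of the cubic `-x³ + σx² + const` whose roots are
the `βᵢ`, so it separates the two positive roots.
-/

section RootsWithVanishingSecondSymmetricFunction

variable {K : Type*} [Field K] [LinearOrder K] [IsStrictOrderedRing K] {x y z : K}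

private lemma pos_of_mul_add_pos {t : K} (hy : 0 < y) (hz : 0 < z) (h : 0 < t * (y + z)) :
    0 < t :=
  pos_of_mul_pos_left h (add_pos hy hz).le

lemma add_add_pos_of_mul_add_mul_add_mul_eq_zero (hσ : x * y + x * z + y * z = 0)
    (hy : 0 < y) (hz : 0 < z) : 0 < x + y + z :=
  pos_of_mul_add_pos hy hz <| by
    rw [show (x + y + z) * (y + z) = y ^ 2 + y * z + z ^ 2 by linear_combination hσ]
    positivity

lemma lt_add_add_of_mul_add_mul_add_mul_eq_zero (hσ : x * y + x * z + y * z = 0)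
    (hy : 0 < y) (hz : 0 < z) : z < x + y + z :=
  sub_pos.1 <| pos_of_mul_add_pos hy hz <| by
    rw [show (x + y + z - z) * (y + z) = y ^ 2 by linear_combination hσ]
    positivity

lemma three_mul_lt_two_mul_add_add_of_mul_add_mul_add_mul_eq_zero
    (hσ : x * y + x * z + y * z = 0) (hy : 0 < y) (hyz : y < z) : 3 * y < 2 * (x + y + z) :=
  sub_pos.1 <| pos_of_mul_add_pos hy (hy.trans hyz) <| by
    rw [show (2 * (x + y + z) - 3 * y) * (y + z) = (z - y) * (2 * z + y) by
      linear_combination 2 * hσ]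
    exact mul_pos (sub_pos.2 hyz) (by linarith)

lemma two_mul_add_add_lt_three_mul_of_mul_add_mul_add_mul_eq_zero
    (hσ : x * y + x * z + y * z = 0) (hy : 0 < y) (hyz : y < z) : 2 * (x + y + z) < 3 * z :=
  sub_pos.1 <| pos_of_mul_add_pos hy (hy.trans hyz) <| by
    rw [show (3 * z - 2 * (x + y + z)) * (y + z) = (z - y) * (z + 2 * y) by
      linear_combination -2 * hσ]
    exact mul_pos (sub_pos.2 hyz) (by linarith)

end RootsWithVanishingSecondSymmetricFunction

theorem stmt2_general (c β₁ β₂ β₃ : ℝ)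
    (h2 : 0 < β₂) (h3 : β₂ < β₃)
    (hsum : β₁ + β₂ + β₃ = 5*(c-1)/4)
    (hprod : β₁*β₂ + β₁*β₃ + β₂*β₃ = 0) :
    1 < c ∧ 0 < β₂ ∧ β₂ < 5*(c-1)/6 ∧ 5*(c-1)/6 < β₃ ∧ β₃ < 5*(c-1)/4 := by
  have h3' := h2.trans h3
  have hσ_pos := add_add_pos_of_mul_add_mul_add_mul_eq_zero hprod h2 h3'
  have hβ₃_lt := lt_add_add_of_mul_add_mul_add_mul_eq_zero hprod h2 h3'
  have hβ₂_lt := three_mul_lt_two_mul_add_add_of_mul_add_mul_add_mul_eq_zero hprod h2 h3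
  have hlt_β₃ := two_mul_add_add_lt_three_mul_of_mul_add_mul_add_mul_eq_zero hprod h2 h3
  rw [hsum] at hσ_pos hβ₃_lt hβ₂_lt hlt_β₃
  refine ⟨by linarith, h2, by linarith, by linarith, hβ₃_lt⟩

theorem stmt2 (c β₁ β₂ β₃ : ℝ)
    (h1 : β₁ < 0) (h2 : 0 < β₂) (h3 : β₂ < β₃)
    (hsum : β₁ + β₂ + β₃ = 5*(c-1)/4)
    (hprod : β₁*β₂ + β₁*β₃ + β₂*β₃ = 0) :
    1 < c ∧ 0 < β₂ ∧ β₂ < 5*(c-1)/6 ∧ 5*(c-1)/6 < β₃ ∧ β₃ < 5*(c-1)/4 :=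
  stmt2_general c β₁ β₂ β₃ h2 h3 hsum hprod
end
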